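/- arXiv:1311.2690 — 5 statements merged into one kernel-verified Lean document; each statement's English description precedes it below -/
import Mathlib

section
/- Let d : A^K → A be a decomposition operation on a finite set A, and for each 1 ≤ i ≤ K let ~ᵢ be the equivalence relation x ~ᵢ y iff d agrees when x and y are substituted in the i-th slot (other slots fixed arbitrarily). Then the map A → A/~₁ × ⋯ × A/~ₖ sending a to ([a]₁, …, [a]ₖ) is a bijection. -/
/-!
If `a ~ᵢ b` for every slot `i`, then replacing `a` by `b` one slot at a time shows
`d (a, …, a) = d (b, …, b)`, so `a = b` by idempotence. Conversely, the classes
`[c₁]₁, …, [cₖ]ₖ` are realised by `d (c₁, …, cₖ)`: absorption gives `d c ~ᵢ cᵢ` for each `i`.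
-/

/-- `f` depends essentially on its `i`-th variable. -/
def EssDep {n : ℕ} {A B : Type*} (f : (Fin n → A) → B) (i : Fin n) : Prop :=
  ∃ (b : Fin n → A) (a a' : A),
    f (Function.update b i a) ≠ f (Function.update b i a')

open Function

theorem eq_of_forall_update_eq {ι A B : Type*} [Fintype ι] [DecidableEq ι]
    (f : (ι → A) → B) {x y : ι → A}
    (h : ∀ i z, f (update z i (x i)) = f (update z i (y i))) : f x = f y := by
  suffices key : ∀ s : Finset ι, f (s.piecewise y x) = f x by
    simpa using (key Finset.univ).symm
  intro s
  induction s using Finset.induction_on with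
  | empty => simp
  | insert i s hi ih =>
    have hx : update (s.piecewise y x) i (x i) = s.piecewise y x := by
      rw [update_eq_iff]
      exact ⟨(Finset.piecewise_eq_of_notMem _ _ _ hi).symm, fun _ _ => rfl⟩
    rw [Finset.piecewise_insert, ← h, hx, ih]

theorem apply_update_apply_eq_of_absorption {ι A : Type*} [DecidableEq ι] (d : (ι → A) → A)
    (hidem : ∀ x : A, d (fun _ => x) = x)
    (habs : ∀ m : ι → ι → A, d (fun i => d (m i)) = d (fun i => m i i))
    (c z : ι → A) (i : ι) : d (update z i (d c)) = d (update z i (c i)) := by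
  -- Absorption for the matrix whose `i`-th row is `c` and whose `j`-th row is constantly `z j`.
  have hrows : (fun j => d (update (fun j _ => z j) i c j)) = update z i (d c) := by
    ext j
    rcases eq_or_ne j i with rfl | hj
    · simp
    · simp [update_of_ne hj, hidem]
  have hdiag : (fun j => update (fun j _ => z j) i c j j) = update z i (c i) := by
    ext j
    rcases eq_or_ne j i with rfl | hj
    · simp
    · simp [update_of_ne hj]
  rw [← hrows, ← hdiag, habs]

theorem stmt3_general {K : ℕ} {A : Type*} (d : (Fin K → A) → A)
    (hidem : ∀ x : A, d (fun _ => x) = x)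
    (habs : ∀ m : Fin K → Fin K → A,
      d (fun i => d (m i)) = d (fun i => m i i)) :
    (∀ a b : A,
      (∀ (i : Fin K) (z : Fin K → A),
        d (Function.update z i a) = d (Function.update z i b)) → a = b) ∧
    (∀ c : Fin K → A, ∃ a : A, ∀ (i : Fin K) (z : Fin K → A),
      d (Function.update z i (c i)) = d (Function.update z i a)) := by
  refine ⟨fun a b h => ?_, fun c => ⟨d c, fun i z => ?_⟩⟩
  · calc a = d (fun _ => a) := (hidem a).symm
      _ = d (fun _ => b) := eq_of_forall_update_eq d fun i z => h i z
      _ = b := hidem b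
  · exact (apply_update_apply_eq_of_absorption d hidem habs c z i).symm

/-- For a decomposition operation `d : A^K → A` on a finite set `A`, the map
`A → A/~₁ × ⋯ × A/~ₖ`, `a ↦ ([a]₁, …, [a]ₖ)` is a bijection; expressed without
quotients: the family of slot relations jointly separates points (injectivity),
and every `K`-tuple of classes is realized by a single element (surjectivity). -/
theorem stmt3 {K : ℕ} {A : Type*} [Fintype A] (d : (Fin K → A) → A)
    (hdep : ∀ i, EssDep d i)
    (hidem : ∀ x : A, d (fun _ => x) = x)
    (habs : ∀ m : Fin K → Fin K → A,
      d (fun i => d (m i)) = d (fun i => m i i)) :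
    (∀ a b : A,
      (∀ (i : Fin K) (z : Fin K → A),
        d (Function.update z i a) = d (Function.update z i b)) → a = b) ∧
    (∀ c : Fin K → A, ∃ a : A, ∀ (i : Fin K) (z : Fin K → A),
      d (Function.update z i (c i)) = d (Function.update z i a)) :=
  stmt3_general d hidem habs
end

section
/- If d : A^K → A is a decomposition operation on a finite set A, then each quotient A/~ᵢ has at least two elements, and consequently |A| ≥ 2^K; hence K ≤ log₂|A|. -/
/-- If `d : A^K → A` is a decomposition operation on a finite set `A`, then each
quotient `A/~ᵢ` has at least two elements (the slot relation is not total), and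
consequently `|A| ≥ 2^K`. -/
theorem stmt4 {K : ℕ} {A : Type*} [Fintype A] (d : (Fin K → A) → A)
    (hdep : ∀ i, EssDep d i)
    (hidem : ∀ x : A, d (fun _ => x) = x)
    (habs : ∀ m : Fin K → Fin K → A,
      d (fun i => d (m i)) = d (fun i => m i i)) :
    (∀ i : Fin K, ∃ x y : A, ¬ ∀ z : Fin K → A,
      d (Function.update z i x) = d (Function.update z i y)) ∧
    2 ^ K ≤ Fintype.card A := by
  classical
  have hwit : ∀ i : Fin K, ∃ x y : A, ¬ ∀ z : Fin K → A,
      d (Function.update z i x) = d (Function.update z i y) := by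
    intro i
    obtain ⟨b, a, a', h⟩ := hdep i
    exact ⟨a, a', fun h' => h (h' b)⟩
  refine ⟨hwit, ?_⟩
  choose u v huv using hwit
  have key : ∀ (x : Fin K → A) (i : Fin K) (z : Fin K → A),
      d (Function.update z i (d x)) = d (Function.update z i (x i)) := by
    intro x i z
    have h := habs (fun j => if j = i then x else fun _ => z j)
    have h1 : (fun j => d ((fun j => if j = i then x else fun _ => z j) j))
        = Function.update z i (d x) := by
      funext j
      by_cases hj : j = i
      · subst hj; simp
      · simp [hj, hidem, Function.update_of_ne hj]
    have h2 : (fun j => (fun j => if j = i then x else fun _ => z j) j j)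
        = Function.update z i (x i) := by
      funext j
      by_cases hj : j = i
      · subst hj; simp
      · simp [hj, Function.update_of_ne hj]
    rw [h1, h2] at h
    exact h
  have inj : Function.Injective
      (fun s : Fin K → Bool => d (fun i => if s i then u i else v i)) := by
    intro s t hst
    simp only at hst
    funext i
    by_contra hne
    apply huv i
    intro z
    have hs := key (fun j => if s j then u j else v j) i z
    have ht := key (fun j => if t j then u j else v j) i z
    rw [hst] at hs
    have h3 : d (Function.update z i (if s i then u i else v i))
        = d (Function.update z i (if t i then u i else v i)) := hs.symm.trans ht
    cases hsi : s i <;> cases hti : t i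
    · exact absurd (by rw [hsi, hti]) hne
    · rw [hsi, hti] at h3; simpa using h3.symm
    · rw [hsi, hti] at h3; simpa using h3
    · exact absurd (by rw [hsi, hti]) hne
  have := Fintype.card_le_of_injective _ inj
  simpa using this
end

section
/- Let f : A₁ × ⋯ × Aₙ → B be a function between finite sets such that for each i there is an equivalence relation Eᵢ on Aᵢ with: f(x₁,…,xₙ) = f(y₁,…,yₙ) if and only if (xᵢ, yᵢ) ∈ Eᵢ for all i. Then f depends essentially on at most log₂|B| of its variables. -/
/-- `f` depends essentially on its `i`-th variable (dependent-type version). -/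
def EssDepPi {n : ℕ} {X : Fin n → Type*} {Y : Type*}
    (f : (∀ j, X j) → Y) (i : Fin n) : Prop :=
  ∃ (b : ∀ j, X j) (a a' : X i),
    f (Function.update b i a) ≠ f (Function.update b i a')

/-- A rectangular function `f : A₁ × ⋯ × Aₙ → B` between finite sets (equality of
values determined coordinatewise by equivalence relations `Eᵢ`) depends essentially
on at most `log₂ |B|` of its variables. -/
theorem stmt5 {n : ℕ} {A : Fin n → Type*} {B : Type*}
    [∀ i, Fintype (A i)] [Fintype B]
    (f : (∀ i, A i) → B) (E : ∀ i, A i → A i → Prop)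
    (hE : ∀ i, Equivalence (E i))
    (hrect : ∀ x y : ∀ i, A i, f x = f y ↔ ∀ i, E i (x i) (y i)) :
    Nat.card {i // EssDepPi f i} ≤ Nat.log 2 (Fintype.card B) := by
  classical
  by_cases hS : Nonempty {i // EssDepPi f i}
  · obtain ⟨⟨i0, b0, _⟩⟩ := hS
    have hz : ∀ i, Nonempty (A i) := fun i => ⟨b0 i⟩
    have key : ∀ i, EssDepPi f i → ∃ a a' : A i, ¬ E i a a' := by
      intro i ⟨b, a, a', hne⟩
      refine ⟨a, a', fun hE' => hne ?_⟩
      rw [hrect]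
      intro j
      by_cases hj : j = i
      · subst hj; simpa using hE'
      · simp [Function.update_of_ne hj, (hE j).refl]
    choose x y hxy using key
    set g : ({i // EssDepPi f i} → Bool) → B := fun c =>
      f (fun i => if h : EssDepPi f i then (if c ⟨i, h⟩ then x i h else y i h)
          else (hz i).some) with hg
    have hginj : Function.Injective g := by
      intro c c' hcc
      funext ⟨i, h⟩
      rw [hg] at hcc
      have := (hrect _ _).mp hcc i
      simp only [dif_pos h] at this
      by_contra hne
      rcases Bool.eq_false_or_eq_true (c ⟨i, h⟩) with h1 | h1 <;>
        rcases Bool.eq_false_or_eq_true (c' ⟨i, h⟩) with h2 | h2 <;>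
          simp [h1, h2] at hne this ⊢
      · exact hxy i h this
      · exact hxy i h ((hE i).symm this)
    have hcard : 2 ^ Fintype.card {i // EssDepPi f i} ≤ Fintype.card B := by
      have := Fintype.card_le_of_injective g hginj
      simpa [Fintype.card_fun] using this
    rw [Nat.card_eq_fintype_card]
    exact Nat.le_log_of_pow_le one_lt_two hcard
  · rw [not_nonempty_iff] at hS
    simp [Nat.card_of_isEmpty]
end

section
/- Let A be a finite strongly abelian algebra, i.e., every term operation of A is rectangular, and suppose A has a term operation t : A^K → A that is idempotent (t(x,…,x) = x) and depends essentially on all K of its variables. Then K ≤ log₂|A|, i.e., |A| ≥ 2^K. -/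
/-- If a finite (strongly abelian) algebra `A` has a term operation `t : A^K → A`
which is rectangular, idempotent and depends essentially on all `K` of its
variables, then `|A| ≥ 2^K` (i.e. `K ≤ log₂ |A|`). -/
theorem stmt12 {K : ℕ} {A : Type*} [Fintype A]
    (t : (Fin K → A) → A) (E : Fin K → A → A → Prop)
    (hE : ∀ i, Equivalence (E i))
    (hrect : ∀ x y : Fin K → A, t x = t y ↔ ∀ i, E i (x i) (y i))
    (hidem : ∀ x : A, t (fun _ => x) = x)
    (hdep : ∀ i, EssDep t i) :
    2 ^ K ≤ Fintype.card A := by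
  have h : ∀ i : Fin K, ∃ a a' : A, ¬ E i a a' := by
    intro i
    obtain ⟨b, a, a', hne⟩ := hdep i
    refine ⟨a, a', fun hE' => hne ?_⟩
    rw [hrect]
    intro j
    by_cases hj : j = i
    · subst hj; simpa using hE'
    · simpa [Function.update_of_ne hj] using (hE j).refl (b j)
  choose a a' ha using h
  have hinj : Function.Injective
      (fun s : Fin K → Bool => t (fun i => if s i then a' i else a i)) := by
    intro s s' hss
    funext i
    by_contra hne
    have hEi := ((hrect _ _).mp hss) i
    cases hsi : s i <;> cases hsi' : s' i <;>
      simp [hsi, hsi'] at hEi hne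
    · exact ha i (hEi)
    · exact ha i ((hE i).symm hEi)
  calc 2 ^ K = Fintype.card (Fin K → Bool) := by simp
    _ ≤ Fintype.card A := Fintype.card_le_of_injective _ hinj
end

section
/- Let A be a finite set and d : A^K → A a decomposition operation, inducing a bijection φ : A → A₁ × ⋯ × Aₖ with Aᵢ = A/~ᵢ. Then under this identification, d acts as the 'diagonal selection': d(a₁,…,aₖ) is the unique element whose i-th component equals the i-th component of aᵢ, for each i. -/
/-- Under the identification `A ≅ A/~₁ × ⋯ × A/~ₖ` induced by a decomposition
operation `d`, the operation `d` acts as diagonal selection: the `i`-th component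
of `d (a₁, …, aₖ)` equals the `i`-th component of `aᵢ`, i.e. `d (a₁, …, aₖ) ~ᵢ aᵢ`
for each `i`. -/
theorem stmt13 {K : ℕ} {A : Type*} [Fintype A] (d : (Fin K → A) → A)
    (hdep : ∀ i, EssDep d i)
    (hidem : ∀ x : A, d (fun _ => x) = x)
    (habs : ∀ m : Fin K → Fin K → A,
      d (fun i => d (m i)) = d (fun i => m i i)) :
    ∀ (a : Fin K → A) (i : Fin K) (z : Fin K → A),
      d (Function.update z i (d a)) = d (Function.update z i (a i)) := by
  intro a i z
  have h := habs (fun j => if j = i then a else fun _ => z j)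
  have h1 : (fun j => d (if j = i then a else fun _ => z j)) = Function.update z i (d a) := by
    funext j
    by_cases hj : j = i <;> simp [Function.update, hj, hidem]
  have h2 : (fun j => (if j = i then a else fun _ => z j) j) = Function.update z i (a i) := by
    funext j
    by_cases hj : j = i <;> simp [Function.update, hj]
  rw [h1, h2] at h
  exact h
end
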